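/- arXiv:2204.03130 — 2 statements merged into one kernel-verified Lean document; each statement's English description precedes it below -/
import Mathlib

section
/- Let p and q be primes with q < p, let m ≥ 1 be a natural number, and let r be the remainder of m·p upon division by q. If r ≠ 0, then q divides the binomial coefficient C(m·p − 1, r) and p does not divide C(m·p − 1, r). -/
/-- for primes `q < p`, `m ≥ 1`, and `r` the remainder of `m·p` mod `q`,
if `r ≠ 0` then `q` divides `C(mp−1, r)` and `p` does not divide `C(mp−1, r)`. -/
theorem stmt_10 (p q : ℕ) (hp : p.Prime) (hq : q.Prime) (hqp : q < p)
    (m : ℕ) (hm : 1 ≤ m) (r : ℕ) (hr : r = (m * p) % q) (hr0 : r ≠ 0) :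
    q ∣ Nat.choose (m * p - 1) r ∧ ¬ p ∣ Nat.choose (m * p - 1) r := by
  have hq0 : 0 < q := hq.pos
  have hrq : r < q := hr ▸ Nat.mod_lt _ hq0
  have hpmp : p ≤ m * p := Nat.le_mul_of_pos_left p hm
  have hrmp : r < m * p := lt_of_lt_of_le (hrq.trans hqp) hpmp
  have hrpos : 0 < r := Nat.pos_of_ne_zero hr0
  have hdesc : (m * p - 1).descFactorial r = Nat.factorial r * (m * p - 1).choose r :=
    Nat.descFactorial_eq_factorial_mul_choose _ _
  constructor
  · have hqmr : q ∣ m * p - r := by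
      have : m * p = q * (m * p / q) + r := by rw [hr]; exact (Nat.div_add_mod _ _).symm
      exact ⟨m * p / q, by omega⟩
    have hqdvd : q ∣ (m * p - 1).descFactorial r := by
      rw [Nat.descFactorial_eq_prod_range]
      have hmem : r - 1 ∈ Finset.range r := Finset.mem_range.mpr (by omega)
      refine dvd_trans ?_ (Finset.dvd_prod_of_mem (fun i => m * p - 1 - i) hmem)
      have : m * p - 1 - (r - 1) = m * p - r := by omega
      simpa [this] using hqmr
    have hcop : Nat.Coprime q (Nat.factorial r) := by
      refine (Nat.Prime.coprime_iff_not_dvd hq).mpr ?_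
      rw [Nat.Prime.dvd_factorial hq]; omega
    exact hcop.dvd_of_dvd_mul_left (hdesc ▸ hqdvd)
  · intro hpdvd
    have hpd : p ∣ (m * p - 1).descFactorial r := hdesc ▸ Dvd.dvd.mul_left hpdvd _
    rw [Nat.descFactorial_eq_prod_range] at hpd
    obtain ⟨i, hi, hpi⟩ := hp.prime.exists_mem_finset_dvd hpd
    rw [Finset.mem_range] at hi
    have h1 : m * p - 1 - i = m * p - (i + 1) := by omega
    rw [h1] at hpi
    have hple : i + 1 ≤ m * p := by omega
    have hmul : p ∣ m * p := Dvd.dvd.mul_left dvd_rfl m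
    have : p ∣ i + 1 := by
      have h2 := Nat.dvd_sub hmul hpi
      rwa [Nat.sub_sub_self hple] at h2
    have : p ≤ i + 1 := Nat.le_of_dvd (by omega) this
    omega
end

section
/- Let p and q be distinct primes and let n be a positive integer divisible by both p and q. Let t be the q-adic valuation of n, let a = (n / q^t) mod q, and set A = a·q^t (the lowest nonzero term of the base-q expansion of n). Let s be the p-adic valuation of n, let b = (n / p^s) mod p, and set B = b·p^s (the lowest nonzero term of the base-p expansion of n). If A < B, then q divides the binomial coefficient C(n − 1, A) and p does not divide C(n − 1, A). -/
/-!
Lucas's theorem, applied one digit at a time: since the lowest `v` base-`r` digits of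
`r ^ v * c - 1` all equal `r - 1`, the prime `r` divides `C(r ^ v * c - 1, k)` iff it divides
`C(c - 1, k / r ^ v)`. For `c = n / q ^ t` the last digit of `c - 1` is `a - 1`, smaller than
the last digit `a` of `A / q ^ t`, so `q` divides. For `c = n / p ^ s` the last digit of `c - 1`
is `b - 1`, and `A < B` makes `A / p ^ s` a single digit at most `b - 1`, so `p` does not.
-/

namespace Nat

theorem sub_one_mod_of_mod_ne_zero {c d : ℕ} (h : c % d ≠ 0) : (c - 1) % d = c % d - 1 := by
  rcases Nat.eq_zero_or_pos d with rfl | hd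
  · simp
  have hc : c - 1 = (c % d - 1) + d * (c / d) := by
    have := Nat.mod_add_div c d
    omega
  rw [hc, Nat.add_mul_mod_self_left, Nat.mod_eq_of_lt]
  have := Nat.mod_lt c hd
  omega

namespace Prime

variable {p : ℕ}

theorem div_pow_padicValNat_mod_ne_zero (hp : p.Prime) {n : ℕ} (hn : n ≠ 0) :
    n / p ^ padicValNat p n % p ≠ 0 := by
  rw [← Nat.factorization_def n hp, Ne, ← Nat.dvd_iff_mod_eq_zero]
  exact Nat.not_dvd_ordCompl hp hn

theorem dvd_choose_of_mod_lt_mod (hp : p.Prime) {m k : ℕ} (h : m % p < k % p) :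
    p ∣ m.choose k := by
  have := Fact.mk hp
  have hlucas := Choose.choose_modEq_choose_mod_mul_choose_div_nat (n := m) (k := k) (p := p)
  rw [Nat.choose_eq_zero_of_lt h, zero_mul] at hlucas
  exact Nat.modEq_zero_iff_dvd.mp hlucas

theorem dvd_choose_iff_dvd_choose_div (hp : p.Prime) {m k : ℕ} (h : k % p ≤ m % p) :
    p ∣ m.choose k ↔ p ∣ (m / p).choose (k / p) := by
  have := Fact.mk hp
  rw [(Choose.choose_modEq_choose_mod_mul_choose_div_nat (p := p)).dvd_iff dvd_rfl, hp.dvd_mul,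
    or_iff_right]
  exact hp.coprime_iff_not_dvd.mp (hp.coprime_choose_of_lt (m.mod_lt hp.pos) h)

theorem not_dvd_choose_of_le_mod (hp : p.Prime) {m k : ℕ} (hk : k < p) (h : k ≤ m % p) :
    ¬p ∣ m.choose k := by
  rw [hp.dvd_choose_iff_dvd_choose_div (by rwa [Nat.mod_eq_of_lt hk]), Nat.div_eq_of_lt hk,
    choose_zero_right]
  exact hp.not_dvd_one

theorem dvd_choose_mul_sub_one_iff (hp : p.Prime) {c k : ℕ} (hc : c ≠ 0) :
    p ∣ (p * c - 1).choose k ↔ p ∣ (c - 1).choose (k / p) := by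
  have hrepr : p * c - 1 = (p - 1) + p * (c - 1) := by
    have := hp.one_lt
    rw [Nat.mul_sub_one]
    have : p ≤ p * c := Nat.le_mul_of_pos_right p (Nat.pos_of_ne_zero hc)
    omega
  have hmod : (p * c - 1) % p = p - 1 := by
    rw [hrepr, Nat.add_mul_mod_self_left, Nat.mod_eq_of_lt (Nat.sub_lt hp.pos one_pos)]
  have hdiv : (p * c - 1) / p = c - 1 := by
    rw [hrepr, Nat.add_mul_div_left _ _ hp.pos, Nat.div_eq_of_lt (Nat.sub_lt hp.pos one_pos),
      zero_add]
  rw [hp.dvd_choose_iff_dvd_choose_div (hmod ▸ Nat.le_sub_one_of_lt (k.mod_lt hp.pos)), hdiv]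

theorem dvd_choose_pow_mul_sub_one_iff (hp : p.Prime) {c : ℕ} (hc : c ≠ 0) (s k : ℕ) :
    p ∣ (p ^ s * c - 1).choose k ↔ p ∣ (c - 1).choose (k / p ^ s) := by
  induction s generalizing c with
  | zero => simp
  | succ s ih =>
    rw [pow_succ, mul_assoc, ih (mul_ne_zero hp.ne_zero hc), hp.dvd_choose_mul_sub_one_iff hc,
      Nat.div_div_eq_div_mul]

end Prime

end Nat

theorem stmt_11_general (p q : ℕ) (hp : p.Prime) (hq : q.Prime)
    (n : ℕ) (hn : 0 < n)
    (t a A s b B : ℕ)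
    (ht : t = padicValNat q n) (ha : a = (n / q ^ t) % q) (hA : A = a * q ^ t)
    (hs : s = padicValNat p n) (hb : b = (n / p ^ s) % p) (hB : B = b * p ^ s)
    (hAB : A < B) :
    q ∣ Nat.choose (n - 1) A ∧ ¬ p ∣ Nat.choose (n - 1) A := by
  have hnq : q ^ t * (n / q ^ t) = n := Nat.mul_div_cancel' (ht ▸ pow_padicValNat_dvd)
  have hnp : p ^ s * (n / p ^ s) = n := Nat.mul_div_cancel' (hs ▸ pow_padicValNat_dvd)
  have ha0 : a ≠ 0 := ha ▸ ht ▸ hq.div_pow_padicValNat_mod_ne_zero hn.ne'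
  have hb0 : b ≠ 0 := hb ▸ hs ▸ hp.div_pow_padicValNat_mod_ne_zero hn.ne'
  have hcq : n / q ^ t ≠ 0 := fun h ↦ ha0 (by simp [ha, h])
  have hcp : n / p ^ s ≠ 0 := fun h ↦ hb0 (by simp [hb, h])
  constructor
  · rw [← hnq, hq.dvd_choose_pow_mul_sub_one_iff hcq, hA, Nat.mul_div_cancel _ (pow_pos hq.pos t)]
    apply hq.dvd_choose_of_mod_lt_mod
    rw [Nat.sub_one_mod_of_mod_ne_zero (ha ▸ ha0), ← ha,
      Nat.mod_eq_of_lt (ha ▸ Nat.mod_lt _ hq.pos)]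
    omega
  · rw [← hnp, hp.dvd_choose_pow_mul_sub_one_iff hcp]
    have hAb : A / p ^ s < b := (Nat.div_lt_iff_lt_mul (pow_pos hp.pos s)).mpr (hB ▸ hAB)
    apply hp.not_dvd_choose_of_le_mod (hAb.trans (hb ▸ Nat.mod_lt _ hp.pos))
    rw [Nat.sub_one_mod_of_mod_ne_zero (hb ▸ hb0), ← hb]
    omega

/-- for distinct primes `p, q` dividing `n > 0`, with `A` the lowest nonzero
term of the base-`q` expansion of `n` and `B` the lowest nonzero term of the base-`p`
expansion of `n`, if `A < B` then `q ∣ C(n−1, A)` and `p ∤ C(n−1, A)`. -/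
theorem stmt_11 (p q : ℕ) (hp : p.Prime) (hq : q.Prime) (hpq : p ≠ q)
    (n : ℕ) (hn : 0 < n) (hpn : p ∣ n) (hqn : q ∣ n)
    (t a A s b B : ℕ)
    (ht : t = padicValNat q n) (ha : a = (n / q ^ t) % q) (hA : A = a * q ^ t)
    (hs : s = padicValNat p n) (hb : b = (n / p ^ s) % p) (hB : B = b * p ^ s)
    (hAB : A < B) :
    q ∣ Nat.choose (n - 1) A ∧ ¬ p ∣ Nat.choose (n - 1) A :=
  stmt_11_general p q hp hq n hn t a A s b B ht ha hA hs hb hB hAB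
end
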